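/- Assume (L_0, L_∞, V_A) is balanced in V, i.e., each of L_0 (an A_0-submodule), L_∞ (an A_∞-submodule) and V_A (an A-submodule) generates V over K = Q(q), and E := L_0 ∩ L_∞ ∩ V_A → L_0/qL_0 is an isomorphism. Then the natural map (L_0 ∩ V_A) ⊕ (q^{-1}L_∞ ∩ V_A) → V_A is an isomorphism. -/

import Mathlib

noncomputable section

/-- The base field `K = ℚ(q)`. -/
abbrev KK : Type := RatFunc ℚ

/-- The indeterminate `q`. -/
abbrev qq : KK := RatFunc.X

/-- `A₀`: rational functions regular at `q = 0`. -/
def Areg0 : Set KK := {f : KK | (RatFunc.denom f).eval 0 ≠ 0}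

/-- `A_∞`: rational functions regular at `q = ∞`. -/
def AregInf : Set KK := {f : KK | (RatFunc.num f).degree ≤ (RatFunc.denom f).degree}

/-- `A = ℚ[q, q⁻¹]`: Laurent polynomials. -/
def ALaur : Set KK :=
  {f : KK | ∃ (p : Polynomial ℚ) (n : ℕ), f = algebraMap (Polynomial ℚ) KK p / qq ^ n}

/-!
Every `x ∈ V_A` has `qⁿ x ∈ L₀` for some `n`, because `L₀` spans `V` and every element of `K`
becomes regular at `0` after multiplication by a power of `q`. Descend on `n`: surjectivity of
`E → L₀/qL₀` writes `qⁿ x = e + q v` with `e ∈ E` and `v ∈ L₀`, so `x - q⁻ⁿ e` needs only `qⁿ⁻¹`,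
while `q⁻ⁿ e ∈ q⁻¹L_∞ ∩ V_A` since `n ≥ 1`. The sum is direct because `x ∈ L₀ ∩ q⁻¹L_∞ ∩ V_A`
gives `q x ∈ E ∩ qL₀`, which vanishes by injectivity.
-/

open Polynomial

theorem div_mem_Areg0 (a : ℚ[X]) {b : ℚ[X]} (hb : b.eval 0 ≠ 0) :
    algebraMap ℚ[X] KK a / algebraMap ℚ[X] KK b ∈ Areg0 := by
  obtain ⟨c, hc⟩ := RatFunc.denom_div_dvd a b
  exact fun h => hb (by rw [hc, eval_mul, h, zero_mul])

theorem qq_mem_Areg0 : qq ∈ Areg0 := by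
  simp [Areg0, RatFunc.denom_X]

theorem exists_pow_mul_mem_Areg0 (c : KK) : ∃ k : ℕ, qq ^ k * c ∈ Areg0 := by
  obtain ⟨k, g, hdenom, hg0⟩ : ∃ (k : ℕ) (g : ℚ[X]), c.denom = X ^ k * g ∧ g.eval 0 ≠ 0 := by
    obtain ⟨g, hdenom, hg⟩ :=
      exists_eq_pow_rootMultiplicity_mul_and_not_dvd c.denom c.denom_ne_zero 0
    rw [map_zero, sub_zero] at hdenom hg
    rw [X_dvd_iff, coeff_zero_eq_eval_zero] at hg
    exact ⟨_, g, hdenom, hg⟩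
  refine ⟨k, ?_⟩
  have hqk : qq ^ k = algebraMap ℚ[X] KK (X ^ k) := by simp
  have hXk : algebraMap ℚ[X] KK (X ^ k) ≠ 0 := RatFunc.algebraMap_ne_zero (pow_ne_zero _ X_ne_zero)
  convert div_mem_Areg0 c.num hg0 using 1
  conv_lhs => rw [hqk, ← c.num_div_denom, hdenom, map_mul, mul_div_assoc', mul_div_mul_left _ _ hXk]

theorem inv_algebraMap_mem_AregInf (p : ℚ[X]) : (algebraMap ℚ[X] KK p)⁻¹ ∈ AregInf := by
  rcases eq_or_ne p 0 with rfl | hp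
  · simp [AregInf]
  have hunit : IsUnit (algebraMap ℚ[X] KK p)⁻¹.num := isUnit_of_dvd_one <| by
    simpa using RatFunc.num_inv_dvd (RatFunc.algebraMap_ne_zero hp)
  rw [AregInf, Set.mem_ofPred_eq, degree_eq_zero_of_isUnit hunit]
  exact zero_le_degree_iff.mpr (RatFunc.denom_ne_zero _)

theorem inv_qq_pow_mem_AregInf (n : ℕ) : (qq ^ n)⁻¹ ∈ AregInf := by
  simpa [← RatFunc.algebraMap_X] using inv_algebraMap_mem_AregInf (X ^ n)

theorem qq_mem_ALaur : qq ∈ ALaur := ⟨X, 0, by simp⟩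

theorem inv_qq_pow_mem_ALaur (n : ℕ) : (qq ^ n)⁻¹ ∈ ALaur := ⟨1, n, by simp⟩

theorem neg_one_mem_ALaur : -1 ∈ ALaur := ⟨-1, 0, by simp⟩

theorem pow_smul_mem_of_le {M V : Type*} [Monoid M] [MulAction M V] {q : M} {L : Set V}
    (hL : ∀ x ∈ L, q • x ∈ L) {v : V} {m n : ℕ} (hmn : m ≤ n) (hv : q ^ m • v ∈ L) :
    q ^ n • v ∈ L := by
  induction n, hmn using Nat.le_induction with
  | base => exact hv
  | succ n _ ih => simpa only [pow_succ', mul_smul] using hL _ ih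

theorem exists_pow_smul_mem_of_span_eq_top {K V : Type*} [CommSemiring K] [AddCommMonoid V]
    [Module K V] {A : Set K} {q : K} (hqA : q ∈ A) (hA : ∀ c : K, ∃ k : ℕ, q ^ k * c ∈ A)
    {L : AddSubmonoid V} (hLsmul : ∀ c ∈ A, ∀ x ∈ L, c • x ∈ L)
    (hspan : Submodule.span K (L : Set V) = ⊤) (v : V) :
    ∃ n : ℕ, q ^ n • v ∈ L := by
  have hv : v ∈ Submodule.span K L := hspan ▸ Submodule.mem_top
  induction hv using Submodule.span_induction with
  | mem x hx => exact ⟨0, by simpa using hx⟩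
  | zero => exact ⟨0, by simp⟩
  | add x y _ _ hx hy =>
    obtain ⟨m, hm⟩ := hx
    obtain ⟨n, hn⟩ := hy
    refine ⟨max m n, ?_⟩
    rw [smul_add]
    exact add_mem (pow_smul_mem_of_le (hLsmul q hqA) (le_max_left m n) hm)
      (pow_smul_mem_of_le (hLsmul q hqA) (le_max_right m n) hn)
  | smul c x _ hx =>
    obtain ⟨n, hn⟩ := hx
    obtain ⟨k, hk⟩ := hA c
    refine ⟨k + n, ?_⟩
    rw [pow_add, smul_smul, mul_right_comm, ← smul_smul]
    exact hLsmul _ hk _ hn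

section Decomposition

variable {K V : Type*} [Field K] [AddCommGroup V] [Module K V] {q : K}

theorem exists_add_of_pow_smul_mem (hq : q ≠ 0) {L0 : Set V} {Linf : AddSubmonoid V}
    {VA : AddSubgroup V} (hLinf : ∀ n : ℕ, ∀ x ∈ Linf, (q ^ n)⁻¹ • x ∈ Linf)
    (hVA : ∀ n : ℕ, ∀ x ∈ VA, (q ^ n)⁻¹ • x ∈ VA)
    (hsurj : ∀ x ∈ L0, ∃ e ∈ L0 ∩ (Linf : Set V) ∩ VA, ∃ v ∈ L0, x - e = q • v)
    {n : ℕ} {x : V} (hx : x ∈ VA) (hnx : q ^ n • x ∈ L0) :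
    ∃ y ∈ L0 ∩ (VA : Set V), ∃ z ∈ {v : V | q • v ∈ Linf} ∩ (VA : Set V), x = y + z := by
  induction n generalizing x with
  | zero => exact ⟨x, ⟨by simpa using hnx, hx⟩, 0, ⟨by simp [zero_mem], zero_mem _⟩, by simp⟩
  | succ n ih =>
    obtain ⟨e, ⟨⟨-, heLinf⟩, heVA⟩, v, hv, hxe⟩ := hsurj _ hnx
    have hlower : q ^ n • (x - (q ^ (n + 1))⁻¹ • e) = v := by
      apply smul_right_injective V hq
      dsimp only
      rw [smul_smul, ← pow_succ', smul_sub, smul_smul, mul_inv_cancel₀ (pow_ne_zero _ hq),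
        one_smul, hxe]
    obtain ⟨y, hy, z, ⟨hzLinf, hzVA⟩, hyz⟩ :=
      ih (sub_mem hx (hVA _ _ heVA)) (hlower ▸ hv)
    refine ⟨y, hy, z + (q ^ (n + 1))⁻¹ • e, ⟨?_, add_mem hzVA (hVA _ _ heVA)⟩,
      by rw [← add_assoc, ← hyz, sub_add_cancel]⟩
    have hqe : q • (q ^ (n + 1))⁻¹ • e = (q ^ n)⁻¹ • e := by
      rw [smul_smul, pow_succ', mul_inv, ← mul_assoc, mul_inv_cancel₀ hq, one_mul]
    simpa only [Set.mem_ofPred_eq, smul_add, hqe] using add_mem hzLinf (hLinf n e heLinf)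

theorem eq_zero_of_mem_of_smul_mem (hq : q ≠ 0) {L0 Linf VA : Set V}
    (hL0 : ∀ x ∈ L0, q • x ∈ L0) (hVA : ∀ x ∈ VA, q • x ∈ VA)
    (hinj : ∀ e ∈ L0 ∩ Linf ∩ VA, (∃ v ∈ L0, e = q • v) → e = 0) {x : V}
    (hx : x ∈ L0 ∩ VA) (hqx : q • x ∈ Linf) : x = 0 :=
  (smul_eq_zero.mp (hinj _ ⟨⟨hL0 x hx.1, hqx⟩, hVA x hx.2⟩ ⟨x, hx.1, rfl⟩)).resolve_left hq

end Decomposition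

theorem balanced_i_implies_iii_general
    {V : Type} [AddCommGroup V] [Module KK V]
    (L0 Linf VA : Set V)
    -- `L0` is an `A₀`-submodule
    (hL0zero : (0 : V) ∈ L0) (hL0add : ∀ x y, x ∈ L0 → y ∈ L0 → x + y ∈ L0)
    (hL0smul : ∀ c : KK, c ∈ Areg0 → ∀ x ∈ L0, c • x ∈ L0)
    -- `Linf` is an `A_∞`-submodule
    (hLizero : (0 : V) ∈ Linf) (hLiadd : ∀ x y, x ∈ Linf → y ∈ Linf → x + y ∈ Linf)
    (hLismul : ∀ c : KK, c ∈ AregInf → ∀ x ∈ Linf, c • x ∈ Linf)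
    -- `VA` is an `A`-submodule
    (hVAzero : (0 : V) ∈ VA) (hVAadd : ∀ x y, x ∈ VA → y ∈ VA → x + y ∈ VA)
    (hVAsmul : ∀ c : KK, c ∈ ALaur → ∀ x ∈ VA, c • x ∈ VA)
    -- each generates `V` as a `K`-vector space
    (hgen0 : Submodule.span KK L0 = ⊤)
    -- condition (i): `E → L₀/qL₀` is an isomorphism, where `E = L₀ ∩ L_∞ ∩ V_A`
    (hinj : ∀ e ∈ L0 ∩ Linf ∩ VA, (∃ v ∈ L0, e = qq • v) → e = 0)
    (hsurj : ∀ x ∈ L0, ∃ e ∈ L0 ∩ Linf ∩ VA, ∃ v ∈ L0, x - e = qq • v) :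
    -- condition (iii): `(L₀ ∩ V_A) ⊕ (q⁻¹ L_∞ ∩ V_A) → V_A` is an isomorphism
    (∀ x ∈ VA, ∃ y ∈ L0 ∩ VA, ∃ z ∈ {v : V | qq • v ∈ Linf} ∩ VA, x = y + z) ∧
      (∀ x, x ∈ L0 ∩ VA → x ∈ {v : V | qq • v ∈ Linf} ∩ VA → x = 0) := by
  have hq : qq ≠ 0 := RatFunc.X_ne_zero
  let L0Submonoid : AddSubmonoid V :=
    { carrier := L0, zero_mem' := hL0zero, add_mem' := hL0add _ _ }
  let LinfSubmonoid : AddSubmonoid V :=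
    { carrier := Linf, zero_mem' := hLizero, add_mem' := hLiadd _ _ }
  let VASubgroup : AddSubgroup V :=
    { carrier := VA, zero_mem' := hVAzero, add_mem' := hVAadd _ _
      neg_mem' := fun hx => by simpa using hVAsmul _ neg_one_mem_ALaur _ hx }
  refine ⟨fun x hx => ?_, fun x hx hqx =>
    eq_zero_of_mem_of_smul_mem hq (hL0smul qq qq_mem_Areg0) (hVAsmul qq qq_mem_ALaur) hinj hx hqx.1⟩
  obtain ⟨n, hn⟩ := exists_pow_smul_mem_of_span_eq_top (L := L0Submonoid) qq_mem_Areg0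
    exists_pow_mul_mem_Areg0 hL0smul hgen0 x
  exact exists_add_of_pow_smul_mem (Linf := LinfSubmonoid) (VA := VASubgroup) hq
    (fun n => hLismul _ (inv_qq_pow_mem_AregInf n)) (fun n => hVAsmul _ (inv_qq_pow_mem_ALaur n))
    hsurj hx hn

/-- if `(L₀, L_∞, V_A)` is balanced (each generates `V` over `K`, and
`E := L₀ ∩ L_∞ ∩ V_A → L₀/qL₀` is an isomorphism), then
`(L₀ ∩ V_A) ⊕ (q⁻¹L_∞ ∩ V_A) → V_A` is an isomorphism. -/
theorem balanced_i_implies_iii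
    {V : Type} [AddCommGroup V] [Module KK V]
    (L0 Linf VA : Set V)
    -- `L0` is an `A₀`-submodule
    (hL0zero : (0 : V) ∈ L0) (hL0add : ∀ x y, x ∈ L0 → y ∈ L0 → x + y ∈ L0)
    (hL0smul : ∀ c : KK, c ∈ Areg0 → ∀ x ∈ L0, c • x ∈ L0)
    -- `Linf` is an `A_∞`-submodule
    (hLizero : (0 : V) ∈ Linf) (hLiadd : ∀ x y, x ∈ Linf → y ∈ Linf → x + y ∈ Linf)
    (hLismul : ∀ c : KK, c ∈ AregInf → ∀ x ∈ Linf, c • x ∈ Linf)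
    -- `VA` is an `A`-submodule
    (hVAzero : (0 : V) ∈ VA) (hVAadd : ∀ x y, x ∈ VA → y ∈ VA → x + y ∈ VA)
    (hVAsmul : ∀ c : KK, c ∈ ALaur → ∀ x ∈ VA, c • x ∈ VA)
    -- each generates `V` as a `K`-vector space
    (hgen0 : Submodule.span KK L0 = ⊤)
    (hgeni : Submodule.span KK Linf = ⊤)
    (hgenA : Submodule.span KK VA = ⊤)
    -- condition (i): `E → L₀/qL₀` is an isomorphism, where `E = L₀ ∩ L_∞ ∩ V_A`
    (hinj : ∀ e ∈ L0 ∩ Linf ∩ VA, (∃ v ∈ L0, e = qq • v) → e = 0)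
    (hsurj : ∀ x ∈ L0, ∃ e ∈ L0 ∩ Linf ∩ VA, ∃ v ∈ L0, x - e = qq • v) :
    -- condition (iii): `(L₀ ∩ V_A) ⊕ (q⁻¹ L_∞ ∩ V_A) → V_A` is an isomorphism
    (∀ x ∈ VA, ∃ y ∈ L0 ∩ VA, ∃ z ∈ {v : V | qq • v ∈ Linf} ∩ VA, x = y + z) ∧
      (∀ x, x ∈ L0 ∩ VA → x ∈ {v : V | qq • v ∈ Linf} ∩ VA → x = 0) :=
  balanced_i_implies_iii_general L0 Linf VA hL0zero hL0add hL0smul hLizero hLiadd hLismul hVAzero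
    hVAadd hVAsmul hgen0 hinj hsurj
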